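/- arXiv:1606.01992 — 2 statements merged into one kernel-verified Lean document; each statement's English description precedes it below -/
import Mathlib

section
/- Let K be a closed subspace of ℝ^n, Ω' a nonempty closed convex subset of an affine subspace x₀ + K, g ∈ ℝ^n, and let g^A denote the orthogonal projection of g onto K. Then for every α ≥ 0 and every point x ∈ x₀ + K, the projection of x - α • g onto Ω' equals the projection of x - α • g^A onto Ω'. -/
open RealInnerProductSpace

/-! The gradient splits as `g = gᴬ + (g - gᴬ)` with `g - gᴬ ⊥ K`, while `x - y ∈ K` for every
`y ∈ Ω'`. By Pythagoras, `‖x - α • g - y‖² = ‖x - α • gᴬ - y‖² + ‖α • (g - gᴬ)‖²`, so the two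
squared distance functions on `Ω'` differ by a constant and have the same minimizer, which is
unique because `Ω'` is convex and the Euclidean norm is strictly convex. -/

theorem eq_of_forall_norm_sub_le_of_convex {E : Type*} [NormedAddCommGroup E] [NormedSpace ℝ E]
    [StrictConvexSpace ℝ E] {Ω : Set E} (hΩ : Convex ℝ Ω) {z p q : E} (hp : p ∈ Ω) (hq : q ∈ Ω)
    (hpmin : ∀ y ∈ Ω, ‖z - p‖ ≤ ‖z - y‖) (hqmin : ∀ y ∈ Ω, ‖z - q‖ ≤ ‖z - y‖) : p = q := by
  by_contra hne
  have hmid : (1 / 2 : ℝ) • p + (1 / 2 : ℝ) • q ∈ Ω :=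
    hΩ hp hq (by norm_num) (by norm_num) (by norm_num)
  have hlt : ‖(1 / 2 : ℝ) • (z - p) + (1 / 2 : ℝ) • (z - q)‖ < ‖z - p‖ :=
    norm_combo_lt_of_ne le_rfl (hqmin p hp) (fun h => hne (sub_right_injective h))
      (by norm_num) (by norm_num) (by norm_num)
  have hcombo : (1 / 2 : ℝ) • (z - p) + (1 / 2 : ℝ) • (z - q)
      = z - ((1 / 2 : ℝ) • p + (1 / 2 : ℝ) • q) := by module
  exact (hpmin _ hmid).not_gt (hcombo ▸ hlt)

theorem forall_norm_sub_le_of_sq_eq_add {E : Type*} [SeminormedAddGroup E] {Ω : Set E}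
    {u w p : E} {c : ℝ} (hsplit : ∀ y ∈ Ω, ‖u - y‖ ^ 2 = ‖w - y‖ ^ 2 + c) (hp : p ∈ Ω)
    (hpmin : ∀ y ∈ Ω, ‖u - p‖ ≤ ‖u - y‖) : ∀ y ∈ Ω, ‖w - p‖ ≤ ‖w - y‖ := by
  intro y hy
  have hsq : ‖u - p‖ ^ 2 ≤ ‖u - y‖ ^ 2 := pow_le_pow_left₀ (norm_nonneg _) (hpmin y hy) 2
  rw [hsplit p hp, hsplit y hy] at hsq
  exact (pow_le_pow_iff_left₀ (norm_nonneg _) (norm_nonneg _) two_ne_zero).mp (by linarith)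

theorem norm_sub_sq_eq_norm_sub_starProjection_sq_add {E : Type*} [NormedAddCommGroup E]
    [InnerProductSpace ℝ E] (K : Submodule ℝ E) [K.HasOrthogonalProjection] {z : E} (hz : z ∈ K)
    (v : E) : ‖z - v‖ ^ 2 = ‖z - K.starProjection v‖ ^ 2 + ‖v - K.starProjection v‖ ^ 2 := by
  have hperp : ⟪z - K.starProjection v, v - K.starProjection v⟫ = 0 :=
    K.sub_starProjection_mem_orthogonal v _ (K.sub_mem hz (K.starProjection_apply_mem v))
  have hdecomp : z - v = (z - K.starProjection v) - (v - K.starProjection v) := by abel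
  rw [hdecomp, norm_sub_sq_real, hperp]
  ring

theorem projection_eq_of_projected_gradient_general {n : ℕ}
    (K : Submodule ℝ (EuclideanSpace ℝ (Fin n)))
    (x₀ : EuclideanSpace ℝ (Fin n))
    (Ω' : Set (EuclideanSpace ℝ (Fin n)))
    (hΩconv : Convex ℝ Ω')
    (hΩaff : ∀ y ∈ Ω', y - x₀ ∈ K)
    (P' : EuclideanSpace ℝ (Fin n) → EuclideanSpace ℝ (Fin n))
    (hP' : ∀ x, P' x ∈ Ω' ∧ ∀ y ∈ Ω', ‖x - P' x‖ ≤ ‖x - y‖)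
    (g : EuclideanSpace ℝ (Fin n)) (α : ℝ)
    (x : EuclideanSpace ℝ (Fin n)) (hx : x - x₀ ∈ K) :
    P' (x - α • g) =
      P' (x - α • (K.orthogonalProjection g : EuclideanSpace ℝ (Fin n))) := by
  rw [← K.starProjection_apply]
  have hsplit : ∀ y ∈ Ω', ‖x - α • g - y‖ ^ 2
      = ‖x - α • K.starProjection g - y‖ ^ 2 + ‖α • g - K.starProjection (α • g)‖ ^ 2 := by
    intro y hy
    have hxy : x - y ∈ K := by simpa using K.sub_mem hx (hΩaff y hy)
    simpa only [sub_right_comm x, map_smul]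
      using norm_sub_sq_eq_norm_sub_starProjection_sq_add K hxy (α • g)
  obtain ⟨hmem, hmin⟩ := hP' (x - α • g)
  exact eq_of_forall_norm_sub_le_of_convex hΩconv hmem (hP' _).1
    (forall_norm_sub_le_of_sq_eq_add hsplit hmem hmin) (hP' _).2

theorem projection_eq_of_projected_gradient {n : ℕ}
    (K : Submodule ℝ (EuclideanSpace ℝ (Fin n)))
    (x₀ : EuclideanSpace ℝ (Fin n))
    (Ω' : Set (EuclideanSpace ℝ (Fin n)))
    (hΩne : Ω'.Nonempty) (hΩcl : IsClosed Ω') (hΩconv : Convex ℝ Ω')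
    (hΩaff : ∀ y ∈ Ω', y - x₀ ∈ K)
    (P' : EuclideanSpace ℝ (Fin n) → EuclideanSpace ℝ (Fin n))
    (hP' : ∀ x, P' x ∈ Ω' ∧ ∀ y ∈ Ω', ‖x - P' x‖ ≤ ‖x - y‖)
    (g : EuclideanSpace ℝ (Fin n)) (α : ℝ) (hα : 0 ≤ α)
    (x : EuclideanSpace ℝ (Fin n)) (hx : x - x₀ ∈ K) :
    P' (x - α • g) =
      P' (x - α • (K.orthogonalProjection g : EuclideanSpace ℝ (Fin n))) :=
  projection_eq_of_projected_gradient_general K x₀ Ω' hΩconv hΩaff P' hP' g α x hx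
end

section
/- Let Ω be a nonempty closed convex subset of ℝ^n, x ∈ Ω, g ∈ ℝ^n, and for α ≥ 0 set d^α(x) = P_Ω(x - α • g) - x. Then for all α ≥ 1, ‖d^α(x)‖ ≥ ‖d^1(x)‖, and for 0 < α ≤ 1, ‖d^α(x)‖ ≥ α·‖d^1(x)‖; in particular ‖d^α(x)‖ ≥ min(α, 1)·‖d^1(x)‖ for all α > 0. -/
open RealInnerProductSpace

theorem projected_gradient_step_monotonicity {n : ℕ}
    (Ω : Set (EuclideanSpace ℝ (Fin n)))
    (hΩne : Ω.Nonempty) (hΩcl : IsClosed Ω) (hΩconv : Convex ℝ Ω)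
    (P : EuclideanSpace ℝ (Fin n) → EuclideanSpace ℝ (Fin n))
    (hP : ∀ x, P x ∈ Ω ∧ ∀ y ∈ Ω, ‖x - P x‖ ≤ ‖x - y‖)
    (x g : EuclideanSpace ℝ (Fin n)) (hx : x ∈ Ω) :
    (∀ α : ℝ, 1 ≤ α → ‖P (x - g) - x‖ ≤ ‖P (x - α • g) - x‖) ∧
    (∀ α : ℝ, 0 < α → α ≤ 1 → α * ‖P (x - g) - x‖ ≤ ‖P (x - α • g) - x‖) ∧
    (∀ α : ℝ, 0 < α → min α 1 * ‖P (x - g) - x‖ ≤ ‖P (x - α • g) - x‖) := by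
  haveI : Nonempty Ω := hΩne.to_subtype
  -- variational inequality
  have VI : ∀ y : EuclideanSpace ℝ (Fin n), ∀ w ∈ Ω, ⟪y - P y, w - P y⟫ ≤ 0 := by
    intro y w hw
    have hmem := (hP y).1
    have hdist := (hP y).2
    have hinf : ‖y - P y‖ = ⨅ w : Ω, ‖y - w‖ := by
      apply le_antisymm
      · exact le_ciInf fun z => hdist z z.2
      · exact ciInf_le ⟨0, by rintro r ⟨z, rfl⟩; exact norm_nonneg _⟩ (⟨P y, hmem⟩ : Ω)
    exact (norm_eq_iInf_iff_real_inner_le_zero hΩconv hmem).mp hinf w hw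
  have key : ∀ a b : ℝ, 0 < a → a ≤ b →
      ‖P (x - a • g) - x‖ ≤ ‖P (x - b • g) - x‖ ∧
      a * ‖P (x - b • g) - x‖ ≤ b * ‖P (x - a • g) - x‖ := by
    intro a b ha hab
    set u := P (x - a • g) - x with hu
    set v := P (x - b • g) - x with hv
    have h1 : ⟪(x - a • g) - P (x - a • g), P (x - b • g) - P (x - a • g)⟫ ≤ 0 :=
      VI _ _ (hP _).1
    have h2 : ⟪(x - b • g) - P (x - b • g), P (x - a • g) - P (x - b • g)⟫ ≤ 0 :=
      VI _ _ (hP _).1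
    have e1 : (x - a • g) - P (x - a • g) = -(a • g) - u := by rw [hu]; abel
    have e2 : P (x - b • g) - P (x - a • g) = v - u := by rw [hu, hv]; abel
    have e3 : (x - b • g) - P (x - b • g) = -(b • g) - v := by rw [hv]; abel
    have e4 : P (x - a • g) - P (x - b • g) = u - v := by rw [hu, hv]; abel
    rw [e1, e2] at h1
    rw [e3, e4] at h2
    have hb : 0 < b := lt_of_lt_of_le ha hab
    have h1' : -(a * ⟪g, v⟫) + a * ⟪g, u⟫ - ⟪u, v⟫ + ‖u‖ ^ 2 ≤ 0 := by
      have expand : ⟪-(a • g) - u, v - u⟫ =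
          -(a * ⟪g, v⟫) + a * ⟪g, u⟫ - ⟪u, v⟫ + ‖u‖ ^ 2 := by
        simp only [inner_sub_left, inner_sub_right, inner_neg_left, real_inner_smul_left,
          real_inner_self_eq_norm_sq]
        ring
      linarith [expand ▸ h1]
    have h2' : -(b * ⟪g, u⟫) + b * ⟪g, v⟫ - ⟪u, v⟫ + ‖v‖ ^ 2 ≤ 0 := by
      have expand : ⟪-(b • g) - v, u - v⟫ =
          -(b * ⟪g, u⟫) + b * ⟪g, v⟫ - ⟪v, u⟫ + ‖v‖ ^ 2 := by
        simp only [inner_sub_left, inner_sub_right, inner_neg_left, real_inner_smul_left,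
          real_inner_self_eq_norm_sq]
        ring
      have hcmm : ⟪v, u⟫ = ⟪u, v⟫ := real_inner_comm u v
      linarith [expand ▸ h2]
    -- abstract everything into real scalars
    obtain ⟨p, hp⟩ : ∃ p : ℝ, ⟪g, u⟫ = p := ⟨_, rfl⟩
    obtain ⟨q, hq⟩ : ∃ q : ℝ, ⟪g, v⟫ = q := ⟨_, rfl⟩
    obtain ⟨r, hr⟩ : ∃ r : ℝ, ⟪u, v⟫ = r := ⟨_, rfl⟩
    obtain ⟨s, hs⟩ : ∃ s : ℝ, ‖u‖ = s := ⟨_, rfl⟩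
    obtain ⟨t, ht⟩ : ∃ t : ℝ, ‖v‖ = t := ⟨_, rfl⟩
    have hcs : r ≤ s * t := by rw [← hr, ← hs, ← ht]; exact real_inner_le_norm u v
    have hsn : (0:ℝ) ≤ s := hs ▸ norm_nonneg u
    have htn : (0:ℝ) ≤ t := ht ▸ norm_nonneg v
    rw [hp, hq, hr, hs] at h1'
    rw [hp, hq, hr, ht] at h2'
    rw [hs, ht]
    clear_value u v
    clear hp hq hr hs ht h1 h2 e1 e2 e3 e4 hu hv u v
    have hcomb : b * s ^ 2 + a * t ^ 2 ≤ (a + b) * r := by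
      nlinarith [mul_le_mul_of_nonneg_left h1' hb.le, mul_le_mul_of_nonneg_left h2' ha.le]
    have hmain : b * s ^ 2 + a * t ^ 2 ≤ (a + b) * (s * t) := by nlinarith
    constructor
    · by_contra hlt
      push_neg at hlt
      nlinarith [mul_nonneg (mul_nonneg (sub_nonneg.mpr hab) htn) (sub_pos.mpr hlt).le,
        mul_pos hb (mul_pos (sub_pos.mpr hlt) (sub_pos.mpr hlt))]
    · by_contra hlt
      push_neg at hlt
      have hst : s < t := by nlinarith [mul_le_mul_of_nonneg_right hab hsn]
      nlinarith [mul_pos (sub_pos.mpr hst) (sub_pos.mpr hlt)]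
  have h1g : P (x - (1:ℝ) • g) = P (x - g) := by rw [one_smul]
  refine ⟨?_, ?_, ?_⟩
  · intro α hα
    have := (key 1 α one_pos hα).1
    rwa [h1g] at this
  · intro α h0 h1
    have := (key α 1 h0 h1).2
    rw [h1g, one_mul] at this
    exact this
  · intro α h0
    rcases le_total α 1 with h | h
    · rw [min_eq_left h]
      have := (key α 1 h0 h).2
      rw [h1g, one_mul] at this
      exact this
    · rw [min_eq_right h, one_mul]
      have := (key 1 α one_pos h).1
      rwa [h1g] at this
end
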